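/- arXiv:2602.07981 — 10 statements merged into one kernel-verified Lean document; each statement's English description precedes it below -/
import Mathlib

section
/- For any two positive semi-definite n×n real matrices A and B, det(Id + A + B) ≤ det(Id + A) · det(Id + B). -/
/-!
Put `C = 1 + A` and `S = √B`. Sylvester's identity `det (1 + X * Y) = det (1 + Y * X)` gives
`det (C + S * S) = det C * det (1 + S * C⁻¹ * S)`. Since `1 ≤ C` forces `C⁻¹ ≤ 1`, conjugating
by `S` yields `1 + S * C⁻¹ * S ≤ 1 + S * S = 1 + B` in the Loewner order, and the determinant is
monotone on positive definite matrices: for `P ≤ Q` write `Q = P + T * T` with `T = √(Q - P)`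
and apply the same identity.
-/

open Matrix
open scoped MatrixOrder

namespace Matrix

variable {n : Type*} [DecidableEq n]

theorem posDef_of_one_le {C : Matrix n n ℝ} (hC : 1 ≤ C) : C.PosDef := by
  simpa using PosDef.one.add_posSemidef hC

variable [Fintype n]

theorem det_add_mul_self {R : Type*} [CommRing R] {P S : Matrix n n R} (hP : IsUnit P.det) :
    (P + S * S).det = P.det * (1 + S * P⁻¹ * S).det := by
  rw [mul_assoc S, det_one_add_mul_comm, ← det_mul, mul_add, mul_one, ← mul_assoc, ← mul_assoc,
    mul_nonsing_inv _ hP, one_mul]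

theorem one_le_det_of_one_le {C : Matrix n n ℝ} (hC : 1 ≤ C) : 1 ≤ C.det := by
  have hH := (posDef_of_one_le hC).isHermitian
  rw [hH.det_eq_prod_eigenvalues]
  exact Finset.one_le_prod fun i _ =>
    (CFC.one_le_iff (R := ℝ) C hH.isSelfAdjoint).1 hC _ (hH.eigenvalues_mem_spectrum_real i)

theorem inv_le_one_of_one_le {C : Matrix n n ℝ} (hC : 1 ≤ C) : C⁻¹ ≤ 1 := by
  have hCpos := posDef_of_one_le hC
  have hspec := (CFC.one_le_iff (R := ℝ) C hCpos.isHermitian.isSelfAdjoint).1 hC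
  rw [CFC.le_one_iff (R := ℝ) C⁻¹ hCpos.inv.isHermitian.isSelfAdjoint]
  lift C to (Matrix n n ℝ)ˣ using hCpos.isUnit
  intro x hx
  rw [← coe_units_inv, ← spectrum.map_inv] at hx
  simpa using inv_le_one_of_one_le₀ (hspec _ hx)

theorem PosDef.det_le_det_of_le {P Q : Matrix n n ℝ} (hP : P.PosDef) (hPQ : P ≤ Q) :
    P.det ≤ Q.det := by
  set T := CFC.sqrt (Q - P)
  have hQ : Q = P + T * T := by
    rw [CFC.sqrt_mul_sqrt_self (Q - P) (sub_nonneg.2 hPQ)]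
    abel
  have hTPT : 0 ≤ T * P⁻¹ * T :=
    conjugate_nonneg_of_nonneg hP.inv.posSemidef.nonneg (CFC.sqrt_nonneg _)
  rw [hQ, det_add_mul_self hP.det_pos.ne'.isUnit]
  exact le_mul_of_one_le_right hP.det_pos.le (one_le_det_of_one_le (le_add_of_nonneg_right hTPT))

end Matrix

/-- For any two positive semi-definite `n × n` real matrices `A` and `B`,
`det (Id + A + B) ≤ det (Id + A) * det (Id + B)`. -/
theorem det_one_add_add_le_det_mul_det {n : ℕ} (A B : Matrix (Fin n) (Fin n) ℝ)
    (hA : A.PosSemidef) (hB : B.PosSemidef) :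
    (1 + A + B).det ≤ (1 + A).det * (1 + B).det := by
  set C := 1 + A
  have hC1 : 1 ≤ C := le_add_of_nonneg_right hA.nonneg
  have hC : C.PosDef := posDef_of_one_le hC1
  set S := CFC.sqrt B
  have hSS : S * S = B := CFC.sqrt_mul_sqrt_self B hB.nonneg
  have hSCS : S * C⁻¹ * S ≤ B := by
    have := conjugate_le_conjugate_of_nonneg (Matrix.inv_le_one_of_one_le hC1) (CFC.sqrt_nonneg B)
    rwa [mul_one, hSS] at this
  have hD : (1 + S * C⁻¹ * S).PosDef :=
    PosDef.one.add_posSemidef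
      (conjugate_nonneg_of_nonneg hC.inv.posSemidef.nonneg (CFC.sqrt_nonneg B)).posSemidef
  calc (C + B).det = C.det * (1 + S * C⁻¹ * S).det := by
        rw [← hSS, det_add_mul_self hC.det_pos.ne'.isUnit]
    _ ≤ C.det * (1 + B).det :=
        mul_le_mul_of_nonneg_left (hD.det_le_det_of_le (add_le_add_right hSCS 1)) hC.det_pos.le
end

section
/- For any positive semi-definite n×n real matrices 𝒜, ℬ, 𝒞, one has det(𝒞) · det(𝒞 + 𝒜 + ℬ) ≤ det(𝒞 + 𝒜) · det(𝒞 + ℬ). -/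
/-!
When `det 𝒞 = 0` the left side vanishes and both factors on the right are nonnegative, so let
`𝒞` be positive definite. The inequality for `(𝒞, 𝒜, ℬ₁)` and for `(𝒞 + ℬ₁, 𝒜, ℬ₂)` multiply to
the inequality for `(𝒞, 𝒜, ℬ₁ + ℬ₂)`, so writing `ℬ` as a sum of rank-one matrices `v vᵀ` reduces
it to `ℬ = v vᵀ`. There the matrix determinant lemma turns it into
`vᵀ (𝒞 + 𝒜)⁻¹ v ≤ vᵀ 𝒞⁻¹ v`, i.e. the antitonicity of inversion in the Loewner order.
-/

open Matrix

namespace Matrix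

variable {n : Type*} [Fintype n] [DecidableEq n]

theorem det_add_vecMulVec {α : Type*} [CommRing α] {C : Matrix n n α} (hC : IsUnit C.det)
    (u v : n → α) : (C + vecMulVec u v).det = C.det * (1 + v ⬝ᵥ C⁻¹ *ᵥ u) := by
  rw [vecMulVec_eq Unit, det_add_replicateCol_mul_replicateRow hC]
  congr 1
  rw [← replicateRow_vecMul, det_unique]
  simp [dotProduct_mulVec]

theorem PosDef.dotProduct_inv_add_mulVec_le {C A : Matrix n n ℝ} (hC : C.PosDef)
    (hA : A.PosSemidef) (v : n → ℝ) : v ⬝ᵥ (C + A)⁻¹ *ᵥ v ≤ v ⬝ᵥ C⁻¹ *ᵥ v := by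
  set x := (C + A)⁻¹ *ᵥ v
  set y := C⁻¹ *ᵥ v
  have hx : (C + A) *ᵥ x = v := by
    rw [mulVec_mulVec, mul_nonsing_inv _ (hC.add_posSemidef hA).det_pos.ne'.isUnit, one_mulVec]
  have hy : C *ᵥ y = v := by
    rw [mulVec_mulVec, mul_nonsing_inv _ hC.det_pos.ne'.isUnit, one_mulVec]
  have hyCx : y ⬝ᵥ C *ᵥ x = x ⬝ᵥ v := by
    have hCt : Cᵀ = C := hC.isHermitian
    rw [dotProduct_mulVec, ← hCt, vecMul_transpose, hy, dotProduct_comm]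
  have hxv : x ⬝ᵥ C *ᵥ x + x ⬝ᵥ A *ᵥ x = x ⬝ᵥ v := by
    rw [← dotProduct_add, ← add_mulVec, hx]
  have hA_nonneg : 0 ≤ x ⬝ᵥ A *ᵥ x := by simpa using hA.dotProduct_mulVec_nonneg x
  have hC_nonneg : 0 ≤ x ⬝ᵥ C *ᵥ x - 2 * (x ⬝ᵥ v) + y ⬝ᵥ v := by
    have := hC.posSemidef.dotProduct_mulVec_nonneg (x - y)
    rw [star_trivial, mulVec_sub, dotProduct_sub, sub_dotProduct, sub_dotProduct, hy, hyCx] at this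
    linarith
  rw [dotProduct_comm v x, dotProduct_comm v y]
  linarith

theorem PosDef.det_mul_det_add_add_vecMulVec_le {C A : Matrix n n ℝ} (hC : C.PosDef)
    (hA : A.PosSemidef) (v : n → ℝ) :
    C.det * (C + A + vecMulVec v v).det ≤ (C + A).det * (C + vecMulVec v v).det := by
  have hCA : (C + A).PosDef := hC.add_posSemidef hA
  rw [det_add_vecMulVec hC.det_pos.ne'.isUnit, det_add_vecMulVec hCA.det_pos.ne'.isUnit]
  calc C.det * ((C + A).det * (1 + v ⬝ᵥ (C + A)⁻¹ *ᵥ v))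
      = C.det * (C + A).det * (1 + v ⬝ᵥ (C + A)⁻¹ *ᵥ v) := by ring
    _ ≤ C.det * (C + A).det * (1 + v ⬝ᵥ C⁻¹ *ᵥ v) := by
      have := hC.dotProduct_inv_add_mulVec_le hA v
      have := mul_pos hC.det_pos hCA.det_pos
      gcongr
    _ = (C + A).det * (C.det * (1 + v ⬝ᵥ C⁻¹ *ᵥ v)) := by ring

theorem det_mul_det_add_add_le_of_add {C A B₁ B₂ : Matrix n n ℝ} (hC : C.PosDef)
    (hB₁ : B₁.PosSemidef) (hB₂ : B₂.PosSemidef)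
    (h₁ : C.det * (C + A + B₁).det ≤ (C + A).det * (C + B₁).det)
    (h₂ : (C + B₁).det * (C + B₁ + A + B₂).det ≤ (C + B₁ + A).det * (C + B₁ + B₂).det) :
    C.det * (C + A + (B₁ + B₂)).det ≤ (C + A).det * (C + (B₁ + B₂)).det := by
  have hCB₁ : (C + B₁).PosDef := hC.add_posSemidef hB₁
  rw [← add_assoc, ← add_assoc]
  rw [add_right_comm C B₁ A] at h₂
  refine le_of_mul_le_mul_right ?_ hCB₁.det_pos
  calc C.det * (C + A + B₁ + B₂).det * (C + B₁).det
      = C.det * ((C + B₁).det * (C + A + B₁ + B₂).det) := by ring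
    _ ≤ C.det * ((C + A + B₁).det * (C + B₁ + B₂).det) := by
      gcongr
      exact hC.det_pos.le
    _ = C.det * (C + A + B₁).det * (C + B₁ + B₂).det := by ring
    _ ≤ (C + A).det * (C + B₁).det * (C + B₁ + B₂).det := by
      gcongr
      exact (hCB₁.add_posSemidef hB₂).det_pos.le
    _ = (C + A).det * (C + B₁ + B₂).det * (C + B₁).det := by ring

theorem PosDef.det_mul_det_add_add_sum_vecMulVec_le {m : ℕ} (v : Fin m → n → ℝ)
    {C A : Matrix n n ℝ} (hC : C.PosDef) (hA : A.PosSemidef) :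
    C.det * (C + A + ∑ i, vecMulVec (v i) (v i)).det ≤
      (C + A).det * (C + ∑ i, vecMulVec (v i) (v i)).det := by
  induction m generalizing C with
  | zero => simp [mul_comm]
  | succ m ih =>
    rw [Fin.sum_univ_succ]
    exact det_mul_det_add_add_le_of_add hC (posSemidef_vecMulVec_self_star (v 0))
      (posSemidef_sum _ fun i _ => posSemidef_vecMulVec_self_star (v i.succ))
      (hC.det_mul_det_add_add_vecMulVec_le hA (v 0))
      (ih (fun i => v i.succ) (hC.add_posSemidef (posSemidef_vecMulVec_self_star (v 0))))

theorem PosDef.det_mul_det_add_add_le {C A B : Matrix n n ℝ} (hC : C.PosDef)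
    (hA : A.PosSemidef) (hB : B.PosSemidef) :
    C.det * (C + A + B).det ≤ (C + A).det * (C + B).det := by
  obtain ⟨m, v, rfl⟩ := posSemidef_iff_eq_sum_vecMulVec.mp hB
  simpa using hC.det_mul_det_add_add_sum_vecMulVec_le v hA

end Matrix

/-- For positive semi-definite matrices `𝒜, ℬ, 𝒞`,
`det 𝒞 * det (𝒞 + 𝒜 + ℬ) ≤ det (𝒞 + 𝒜) * det (𝒞 + ℬ)`. -/
theorem det_mul_det_add_add_le {n : ℕ} (𝒜 ℬ 𝒞 : Matrix (Fin n) (Fin n) ℝ)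
    (hA : 𝒜.PosSemidef) (hB : ℬ.PosSemidef) (hC : 𝒞.PosSemidef) :
    𝒞.det * (𝒞 + 𝒜 + ℬ).det ≤ (𝒞 + 𝒜).det * (𝒞 + ℬ).det := by
  rcases eq_or_ne 𝒞.det 0 with h𝒞 | h𝒞
  · rw [h𝒞, zero_mul]
    exact mul_nonneg (hC.add hA).det_nonneg (hC.add hB).det_nonneg
  · exact (hC.posDef_iff_det_ne_zero.mpr h𝒞).det_mul_det_add_add_le hA hB
end

section
/- For all positive semi-definite n×n real matrices A and B, 1/(1+‖A−B‖_op)^n ≤ det(Id + A)/det(Id + B) ≤ (1+‖A−B‖_op)^n. -/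
/-!
In the Loewner order, `A - B ≤ ‖A - B‖ • 1` and `0 ≤ ‖A - B‖ • B`, so
`1 + A ≤ (1 + ‖A - B‖) • (1 + B)`. The determinant is monotone on positive semidefinite matrices
(conjugating by `M^{-1/2}` reduces `M ≤ N` to `1 ≤ X`, where all eigenvalues of `X` are at least
`1`), which gives `det (1 + A) ≤ (1 + ‖A - B‖)ⁿ det (1 + B)`; the lower bound is the same
inequality with `A` and `B` exchanged.
-/

open Matrix
open scoped MatrixOrder Matrix.Norms.L2Operator

namespace Matrix
variable {ι : Type*} [Fintype ι] [DecidableEq ι]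

theorem one_le_det_of_one_le_s2 {M : Matrix ι ι ℝ} (h : 1 ≤ M) : 1 ≤ M.det := by
  have hM : M.IsHermitian := by
    simpa using (le_iff.1 h).isHermitian.add (isHermitian_one (α := ℝ))
  have hspec : ∀ x ∈ spectrum ℝ M, 1 ≤ x :=
    (algebraMap_le_iff_le_spectrum (r := (1:ℝ)) (a := M) hM.isSelfAdjoint).1 (by simpa using h)
  rw [hM.det_eq_prod_eigenvalues]
  exact Finset.one_le_prod fun i _ => by simpa using hspec _ (hM.eigenvalues_mem_spectrum_real i)

theorem det_le_det_of_le {M N : Matrix ι ι ℝ} (hM : 0 ≤ M) (h : M ≤ N) : M.det ≤ N.det := by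
  by_cases hdet : M.det = 0
  · exact hdet ▸ (hM.trans h).posSemidef.det_nonneg
  set S := CFC.sqrt M
  have hSS : S * S = M := CFC.sqrt_mul_sqrt_self M
  have hS : IsUnit S.det := by
    refine isUnit_iff_ne_zero.2 fun h0 => hdet ?_
    rw [← hSS, det_mul, h0, zero_mul]
  have hSinv : IsSelfAdjoint S⁻¹ := (CFC.sqrt_nonneg M).posSemidef.isHermitian.inv.isSelfAdjoint
  have hconj : 1 ≤ S⁻¹ * N * S⁻¹ := by
    have := hSinv.conjugate_le_conjugate h
    rwa [← hSS, ← Matrix.mul_assoc, nonsing_inv_mul _ hS, Matrix.one_mul,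
      mul_nonsing_inv _ hS] at this
  have hN : N = S * (S⁻¹ * N * S⁻¹) * S := by
    simp only [← Matrix.mul_assoc, mul_nonsing_inv _ hS, Matrix.one_mul]
    rw [Matrix.mul_assoc, nonsing_inv_mul _ hS, Matrix.mul_one]
  rw [hN, ← hSS, det_mul, det_mul, det_mul]
  nlinarith [one_le_det_of_one_le_s2 hconj, mul_self_nonneg S.det]

theorem IsHermitian.le_norm_smul_one {H : Matrix ι ι ℝ} (hH : H.IsHermitian) : H ≤ ‖H‖ • 1 := by
  rw [← Algebra.algebraMap_eq_smul_one]
  refine le_algebraMap_of_spectrum_le (fun x hx => ?_) hH.isSelfAdjoint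
  calc x ≤ ‖x‖ := Real.le_norm_self x
    _ ≤ ‖H‖ * ‖(1 : Matrix ι ι ℝ)‖ := spectrum.norm_le_norm_mul_of_mem hx
    _ ≤ ‖H‖ := mul_le_of_le_one_right (norm_nonneg H) ?_
  rw [cstar_norm_def, map_one]
  exact ContinuousLinearMap.norm_id_le

theorem det_one_add_le_pow_mul_det_one_add {A B : Matrix ι ι ℝ} (hA : A.PosSemidef)
    (hB : B.PosSemidef) : (1 + A).det ≤ (1 + ‖A - B‖) ^ Fintype.card ι * (1 + B).det := by
  set ε := ‖A - B‖
  have hdiff : A - B ≤ ε • 1 := (hA.isHermitian.sub hB.isHermitian).le_norm_smul_one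
  have hεB : 0 ≤ ε • B := smul_nonneg (norm_nonneg _) hB.nonneg
  have hle : 1 + A ≤ (1 + ε) • (1 + B) :=
    calc 1 + A = 1 + B + (A - B) := by abel
      _ ≤ 1 + B + ε • 1 + ε • B := by grw [hdiff, ← hεB]; simp
      _ = (1 + ε) • (1 + B) := by module
  grw [det_le_det_of_le (PosSemidef.one.add hA).nonneg hle, det_smul]

end Matrix

/-- Stability of `det (Id + ·)` in the operator norm: for positive semi-definite `A, B`,
`(1 + ‖A - B‖_op)⁻ⁿ ≤ det (Id + A) / det (Id + B) ≤ (1 + ‖A - B‖_op)ⁿ`. -/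
theorem det_one_add_div_det_one_add_bounds {n : ℕ} (A B : Matrix (Fin n) (Fin n) ℝ)
    (hA : A.PosSemidef) (hB : B.PosSemidef) :
    1 / (1 + ‖Matrix.toEuclideanCLM (𝕜 := ℝ) (A - B)‖) ^ n ≤ (1 + A).det / (1 + B).det ∧
      (1 + A).det / (1 + B).det ≤ (1 + ‖Matrix.toEuclideanCLM (𝕜 := ℝ) (A - B)‖) ^ n := by
  simp only [← cstar_norm_def]
  have hdetB : 0 < (1 + B).det := (PosDef.one.add_posSemidef hB).det_pos
  have upper := det_one_add_le_pow_mul_det_one_add hA hB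
  have lower := det_one_add_le_pow_mul_det_one_add hB hA
  rw [norm_sub_rev, Fintype.card_fin] at lower
  rw [Fintype.card_fin] at upper
  constructor
  · rw [div_le_div_iff₀ (by positivity) hdetB, one_mul, mul_comm]
    exact lower
  · rwa [div_le_iff₀ hdetB]
end

section
/- If A and D are positive semi-definite n×n real matrices and D ≥ Id (i.e., D − Id is positive semi-definite), then det(Id + D A D) ≥ det(Id + A). -/
/-!
With `B = √A`, Sylvester's identity `det (1 + X Y) = det (1 + Y X)` turns `det (1 + D A D)` into
`det (1 + B D² B)`, and `D ≥ 1` gives `D² ≥ 1`, hence `B D² B ≥ B B = A`. It remains that the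
determinant is monotone in the Loewner order on positive definite matrices: if `0 < M ≤ N` then
`N = S (1 + Q) S` with `S = √M` and `Q ≥ 0`, and `det (1 + Q) ≥ 1` because every eigenvalue of
`1 + Q` is at least `1`.
-/

open Matrix
open scoped MatrixOrder

theorem one_le_mul_self_of_one_le {R : Type*} [Ring R] [PartialOrder R] [StarRing R]
    [StarOrderedRing R] {a : R} (ha : 1 ≤ a) : 1 ≤ a * a := by
  have h : 0 ≤ a - 1 := sub_nonneg.2 ha
  have hsq : a * a = 1 + (star (a - 1) * (a - 1) + (a - 1) + (a - 1)) := by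
    rw [(IsSelfAdjoint.of_nonneg h).star_eq]; noncomm_ring
  rw [hsq]
  exact le_add_of_nonneg_right (add_nonneg (add_nonneg (star_mul_self_nonneg _) h) h)

namespace Matrix

variable {m : Type*} [Fintype m] [DecidableEq m]

theorem IsHermitian.det_one_add {A : Matrix m m ℝ} (hA : A.IsHermitian) :
    (1 + A).det = ∏ i, (1 + hA.eigenvalues i) := by
  set U := hA.eigenvectorUnitary
  have hconj : 1 + A = Unitary.conjStarAlgAut ℝ _ U (diagonal (1 + hA.eigenvalues)) := by
    conv_lhs => rw [hA.spectral_theorem, ← map_one (Unitary.conjStarAlgAut ℝ _ U), ← map_add]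
    congr 1
    rw [← diagonal_one, diagonal_add]
    rfl
  rw [hconj, Unitary.conjStarAlgAut_apply, det_mul_right_comm,
    Unitary.mul_star_self_of_mem U.2, one_mul, det_diagonal]
  rfl

theorem PosSemidef.one_le_det_one_add {A : Matrix m m ℝ} (hA : A.PosSemidef) :
    1 ≤ (1 + A).det := by
  rw [hA.isHermitian.det_one_add]
  exact Finset.one_le_prod fun i _ => le_add_of_nonneg_right (hA.eigenvalues_nonneg i)

theorem PosDef.det_le_det {M N : Matrix m m ℝ} (hM : M.PosDef) (hMN : M ≤ N) :
    M.det ≤ N.det := by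
  set S := CFC.sqrt M
  have hS : S.IsHermitian := (CFC.sqrt_nonneg M).posSemidef.isHermitian
  have hSS : S * S = M := CFC.sqrt_mul_sqrt_self M hM.posSemidef.nonneg
  have hSunit : IsUnit S.det := (isUnit_iff_isUnit_det S).1 <|
    CFC.isUnit_sqrt_iff_isStrictlyPositive.2 (isStrictlyPositive_iff_posDef.2 hM)
  set Q := S⁻¹ * (N - M) * S⁻¹
  have hQ : Q.PosSemidef := (hS.inv.isSelfAdjoint.conjugate_nonneg (sub_nonneg.2 hMN)).posSemidef
  have hN : N = S * (1 + Q) * S := by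
    simp only [Q, mul_add, add_mul, mul_one, hSS, ← mul_assoc, mul_nonsing_inv _ hSunit, one_mul]
    simp only [mul_assoc, nonsing_inv_mul _ hSunit, mul_one]
    abel
  calc M.det = M.det * 1 := (mul_one _).symm
    _ ≤ M.det * (1 + Q).det := mul_le_mul_of_nonneg_left hQ.one_le_det_one_add hM.det_pos.le
    _ = N.det := by rw [hN, det_mul, det_mul, ← hSS, det_mul]; ring

end Matrix

theorem det_one_add_conj_ge_general {n : ℕ} (A D : Matrix (Fin n) (Fin n) ℝ)
    (hA : A.PosSemidef) (hD1 : (D - 1).PosSemidef) :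
    (1 + A).det ≤ (1 + D * A * D).det := by
  set B := CFC.sqrt A
  have hB : IsSelfAdjoint B := IsSelfAdjoint.of_nonneg (CFC.sqrt_nonneg A)
  have hBB : B * B = A := CFC.sqrt_mul_sqrt_self A hA.nonneg
  have hDD : 1 ≤ D * D := one_le_mul_self_of_one_le (sub_nonneg.1 hD1.nonneg)
  calc (1 + A).det ≤ (1 + B * (D * D) * B).det := by
        refine PosDef.det_le_det (PosDef.one.add_posSemidef hA) (add_le_add_right ?_ 1)
        simpa only [← hBB, mul_one] using hB.conjugate_le_conjugate hDD
    _ = (1 + (B * D) * (D * B)).det := by simp only [mul_assoc]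
    _ = (1 + D * A * D).det := by rw [det_one_add_mul_comm, ← hBB]; simp only [mul_assoc]

/-- If `A, D` are positive semi-definite and `D ≥ Id`, then
`det (Id + D * A * D) ≥ det (Id + A)`. -/
theorem det_one_add_conj_ge {n : ℕ} (A D : Matrix (Fin n) (Fin n) ℝ)
    (hA : A.PosSemidef) (hD : D.PosSemidef) (hD1 : (D - 1).PosSemidef) :
    (1 + A).det ≤ (1 + D * A * D).det :=
  det_one_add_conj_ge_general A D hA hD1
end

section
/- For positive semi-definite n×n matrices B ≥ C > 0 (B − C positive semi-definite, C positive definite), the function t ↦ det(Id + tB)/det(Id + tC) is non-decreasing on [0, ∞). -/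
/-!
Write `B - C = S * S` with `S = √(B - C) ≥ 0` and put `G t = t • (1 + t • C)⁻¹`. Since
`1 + t • B = (1 + t • C) + (t • S) * S`, the matrix determinant lemma gives
`det (1 + t • B) / det (1 + t • C) = det (1 + S * G t * S)`.
As `1 + s • C` and `1 + t • C` commute, `G t - G s = (t - s) • ((1 + s • C) * (1 + t • C))⁻¹ ≥ 0` for
`s ≤ t`, so `1 + S * G t * S` increases in the Loewner order, and the determinant is monotone
on positive definite matrices: `det (X + S * S) = det X * det (1 + S * X⁻¹ * S)` and the last
factor is a product of eigenvalues `≥ 1`.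
-/

open Matrix
open scoped MatrixOrder

namespace Matrix

variable {ι : Type*} [DecidableEq ι]

theorem PosSemidef.posDef_one_add_smul {C : Matrix ι ι ℝ} (hC : C.PosSemidef) {t : ℝ}
    (ht : 0 ≤ t) : (1 + t • C).PosDef :=
  PosDef.one.add_posSemidef (hC.smul ht)

variable [Fintype ι]

theorem smul_inv_one_add_smul_sub_smul_inv {R : Type*} [CommRing R] {C : Matrix ι ι R}
    {s t : R} (hs : IsUnit (1 + s • C).det) (ht : IsUnit (1 + t • C).det) :
    t • (1 + t • C)⁻¹ - s • (1 + s • C)⁻¹ = (t - s) • ((1 + s • C) * (1 + t • C))⁻¹ := by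
  set P := 1 + s • C
  set Q := 1 + t • C
  have hlin : t • P - s • Q = (t - s) • (1 : Matrix ι ι R) := by
    simp only [P, Q, smul_add, smul_smul, mul_comm t s]
    module
  calc t • Q⁻¹ - s • P⁻¹ = Q⁻¹ * (t • P - s • Q) * P⁻¹ := by
        rw [mul_sub, sub_mul, mul_smul_comm, smul_mul_assoc, mul_smul_comm, smul_mul_assoc,
          mul_nonsing_inv_cancel_right _ _ hs, nonsing_inv_mul _ ht, one_mul]
    _ = (t - s) • (P * Q)⁻¹ := by
        rw [hlin, mul_inv_rev, mul_smul_comm, smul_mul_assoc, mul_one]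

theorem PosSemidef.monotoneOn_smul_inv_one_add_smul {C : Matrix ι ι ℝ} (hC : C.PosSemidef) :
    MonotoneOn (fun t : ℝ => t • (1 + t • C)⁻¹) (Set.Ici 0) := by
  intro s (hs : 0 ≤ s) t (ht : 0 ≤ t) hst
  have hP := hC.posDef_one_add_smul hs
  have hQ := hC.posDef_one_add_smul ht
  have hPQ : (1 + s • C) * (1 + t • C) = 1 + ((s + t) • C + (s * t) • (Cᴴ * C)) := by
    simp only [hC.1.eq, mul_add, add_mul, one_mul, mul_one, smul_mul_smul_comm]
    module
  have hPQ_pos : ((1 + s • C) * (1 + t • C)).PosDef := by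
    rw [hPQ]
    exact PosDef.one.add_posSemidef ((hC.smul (add_nonneg hs ht)).add
      ((posSemidef_conjTranspose_mul_self C).smul (mul_nonneg hs ht)))
  show (t • (1 + t • C)⁻¹ - s • (1 + s • C)⁻¹).PosSemidef
  rw [smul_inv_one_add_smul_sub_smul_inv (isUnit_iff_ne_zero.mpr hP.det_pos.ne')
    (isUnit_iff_ne_zero.mpr hQ.det_pos.ne')]
  exact hPQ_pos.inv.posSemidef.smul (sub_nonneg.mpr hst)

theorem PosSemidef.one_le_det_one_add_s5 {P : Matrix ι ι ℝ} (hP : P.PosSemidef) :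
    1 ≤ (1 + P).det := by
  have hH : (1 + P).IsHermitian := isHermitian_one.add hP.1
  rw [hH.det_eq_prod_eigenvalues]
  refine Finset.one_le_prod fun i _ => ?_
  have hmem : (hH.eigenvalues i - 1) + 1 ∈ spectrum ℝ (algebraMap ℝ _ 1 + P) := by
    simpa using hH.eigenvalues_mem_spectrum_real i
  have := (posSemidef_iff_isHermitian_and_spectrum_nonneg.mp hP).2
    (spectrum.add_mem_add_iff.mp hmem)
  simp only [RCLike.ofReal_real_eq_id, id, Set.mem_ofPred_eq] at this ⊢
  linarith

theorem PosDef.det_le_det_s5 {X Y : Matrix ι ι ℝ} (hX : X.PosDef) (hXY : X ≤ Y) :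
    X.det ≤ Y.det := by
  set S := CFC.sqrt (Y - X)
  have hS : 0 ≤ S := CFC.sqrt_nonneg _
  have hY : Y = X + S * S := by
    rw [CFC.sqrt_mul_sqrt_self _ (sub_nonneg.mpr hXY), add_sub_cancel]
  have hdet : Y.det = X.det * (1 + S * X⁻¹ * S).det := by
    rw [hY, det_add_mul S S (isUnit_iff_ne_zero.mpr hX.det_pos.ne')]
  have hone : 1 ≤ (1 + S * X⁻¹ * S).det :=
    (conjugate_nonneg_of_nonneg hX.inv.posSemidef.nonneg hS).posSemidef.one_le_det_one_add_s5
  rw [hdet]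
  exact le_mul_of_one_le_right hX.det_pos.le hone

theorem det_one_add_smul_div_det_eq {B C S : Matrix ι ι ℝ} (hC : C.PosSemidef)
    (hS : B - C = S * S) {t : ℝ} (ht : 0 ≤ t) :
    (1 + t • B).det / (1 + t • C).det = (1 + S * (t • (1 + t • C)⁻¹) * S).det := by
  have hQ := hC.posDef_one_add_smul ht
  have hsplit : 1 + t • B = (1 + t • C) + (t • S) * S := by
    rw [smul_mul_assoc, ← hS, smul_sub]
    abel
  rw [hsplit, det_add_mul _ _ (isUnit_iff_ne_zero.mpr hQ.det_pos.ne'),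
    mul_div_cancel_left₀ _ hQ.det_pos.ne', mul_smul_comm, mul_smul_comm, smul_mul_assoc]

end Matrix

/-- For `B ≥ C > 0`, the function `t ↦ det (Id + t B) / det (Id + t C)` is
non-decreasing on `[0, ∞)`. -/
theorem monotoneOn_det_ratio {n : ℕ} (B C : Matrix (Fin n) (Fin n) ℝ)
    (hC : C.PosDef) (hBC : (B - C).PosSemidef) :
    MonotoneOn (fun t : ℝ => (1 + t • B).det / (1 + t • C).det) (Set.Ici (0 : ℝ)) := by
  set S := CFC.sqrt (B - C)
  have hS : 0 ≤ S := CFC.sqrt_nonneg _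
  have hSS : B - C = S * S := (CFC.sqrt_mul_sqrt_self _ hBC.nonneg).symm
  have hG := hC.posSemidef.monotoneOn_smul_inv_one_add_smul
  intro s (hs : 0 ≤ s) t (ht : 0 ≤ t) hst
  simp only [det_one_add_smul_div_det_eq hC.posSemidef hSS hs,
    det_one_add_smul_div_det_eq hC.posSemidef hSS ht]
  refine PosDef.det_le_det_s5 (PosDef.one.add_posSemidef ?_) ?_
  · exact (conjugate_nonneg_of_nonneg
      ((hC.posSemidef.posDef_one_add_smul hs).inv.posSemidef.smul hs).nonneg hS).posSemidef
  · exact add_le_add_right (conjugate_le_conjugate_of_nonneg (hG hs ht hst) hS) 1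
end

section
/- Let C, Z be positive semi-definite n×n matrices and let α, β ≥ 0 with α + β = 1. Then det(Id + αC) · det(Id + βC + Z) ≥ det(Id + C) · det(Id + αZ). -/
open Matrix

/-!
Put `A = 1 + α • C`, `Q = 1 + α • Z` and `R = (1 + C) * A⁻¹ + Z`. Since `C` commutes with `A`,
`1 + β • C + Z = R + (α * β) • (C * A⁻¹ * C)` and `R * A = Q * (1 + C + β • (Q⁻¹ * Z))`,
where `C * A⁻¹ * C` and `Q⁻¹ * Z` are positive semidefinite. The determinant is monotone under
adding a positive semidefinite matrix to a positive definite one, hence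
`det A * det (1 + β • C + Z) ≥ det (R * A) = det Q * det (1 + C + β • (Q⁻¹ * Z))`
`≥ det Q * det (1 + C)`.
-/

open scoped MatrixOrder

namespace Matrix

variable {ι : Type*} [Fintype ι] [DecidableEq ι]

theorem IsHermitian.det_cfc {𝕜 : Type*} [RCLike 𝕜] {A : Matrix ι ι 𝕜} (hA : A.IsHermitian)
    (f : ℝ → ℝ) : (cfc f A).det = ∏ i, (f (hA.eigenvalues i) : 𝕜) := by
  rw [hA.cfc_eq]
  simp [IsHermitian.cfc, -Unitary.conjStarAlgAut_apply]

theorem PosSemidef.one_le_det_one_add_s6 {M : Matrix ι ι ℝ} (hM : M.PosSemidef) :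
    1 ≤ (1 + M).det := by
  have h : 1 + M = cfc (fun x : ℝ => 1 + x) M := by
    rw [cfc_const_add 1 (fun x => x) M, cfc_id' ℝ M hM.isHermitian.isSelfAdjoint]
    simp
  rw [h, hM.isHermitian.det_cfc]
  exact Finset.one_le_prod fun i _ => by simpa using hM.eigenvalues_nonneg i

theorem commute_nonsing_inv_right {R : Type*} [CommRing R] {A B : Matrix ι ι R}
    (h : Commute A B) : Commute A B⁻¹ := by
  rw [nonsing_inv_eq_ringInverse]
  by_cases hB : IsUnit B
  · obtain ⟨u, rfl⟩ := hB
    rw [Ring.inverse_unit]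
    exact h.units_inv_right
  · rw [Ring.inverse_non_unit _ hB]
    exact Commute.zero_right A

theorem commute_inv_one_add_smul {R : Type*} [CommRing R] (C : Matrix ι ι R) (a : R) :
    Commute C (1 + a • C)⁻¹ :=
  commute_nonsing_inv_right <| (Commute.one_right C).add_right ((Commute.refl C).smul_right a)

theorem one_add_smul_eq_of_add_eq_one {R : Type*} [CommRing R] (C : Matrix ι ι R) {α β : R}
    (hαβ : α + β = 1) (hA : IsUnit (1 + α • C).det) :
    1 + β • C = (1 + C) * (1 + α • C)⁻¹ + (α * β) • (C * (1 + α • C)⁻¹ * C) := by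
  obtain rfl : β = 1 - α := eq_sub_of_add_eq' hαβ
  have key : (1 + (1 - α) • C) * (1 + α • C) = 1 + C + (α * (1 - α)) • (C * C) := by
    simp only [mul_add, add_mul, one_mul, mul_one, smul_mul_smul_comm]
    module
  have hCC : C * C * (1 + α • C)⁻¹ = C * (1 + α • C)⁻¹ * C := by
    rw [mul_assoc, mul_assoc, (commute_inv_one_add_smul C α).eq]
  calc 1 + (1 - α) • C = (1 + (1 - α) • C) * (1 + α • C) * (1 + α • C)⁻¹ :=
        (mul_nonsing_inv_cancel_right _ _ hA).symm
    _ = _ := by rw [key, add_mul, smul_mul, hCC]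

theorem mul_inv_add_mul_one_add_smul_eq_of_add_eq_one {R : Type*} [CommRing R]
    (C Z : Matrix ι ι R) {α β : R} (hαβ : α + β = 1) (hA : IsUnit (1 + α • C).det)
    (hQ : IsUnit (1 + α • Z).det) :
    ((1 + C) * (1 + α • C)⁻¹ + Z) * (1 + α • C) =
      (1 + α • Z) * (1 + C + β • ((1 + α • Z)⁻¹ * Z)) :=
  calc ((1 + C) * (1 + α • C)⁻¹ + Z) * (1 + α • C) = 1 + C + Z * (1 + α • C) := by
        rw [add_mul, nonsing_inv_mul_cancel_right _ _ hA]
    _ = (1 + α • Z) * (1 + C) + β • Z := by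
        simp only [add_mul, mul_add, one_mul, mul_one, smul_mul, mul_smul_comm]
        linear_combination (norm := module) -(hαβ • Z)
    _ = (1 + α • Z) * (1 + C + β • ((1 + α • Z)⁻¹ * Z)) := by
        rw [mul_add _ (1 + C), mul_smul_comm, ← mul_assoc, mul_nonsing_inv _ hQ, one_mul]

theorem PosSemidef.mul_inv_one_add_smul {C : Matrix ι ι ℝ} (hC : C.PosSemidef) {a : ℝ}
    (ha : 0 ≤ a) : (C * (1 + a • C)⁻¹).PosSemidef := by
  have hA : (1 + a • C).PosDef := PosDef.one.add_posSemidef (hC.smul ha)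
  rw [← nonneg_iff_posSemidef]
  exact Commute.mul_nonneg hC.nonneg hA.inv.posSemidef.nonneg (commute_inv_one_add_smul C a)

theorem PosDef.det_le_det_add {X Y : Matrix ι ι ℝ} (hX : X.PosDef) (hY : Y.PosSemidef) :
    X.det ≤ (X + Y).det := by
  set B := CFC.sqrt X
  have hBB : B * B = X := CFC.sqrt_mul_sqrt_self X hX.posSemidef.nonneg
  have hB : IsUnit B.det := by
    refine isUnit_of_mul_isUnit_left (y := B.det) ?_
    rw [← det_mul, hBB]
    exact hX.det_pos.ne'.isUnit
  have hM : (B⁻¹ * Y * B⁻¹).PosSemidef := by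
    have h := hY.conjTranspose_mul_mul_same B⁻¹
    rwa [(CFC.sqrt_nonneg X).posSemidef.inv.isHermitian.eq] at h
  have hXY : X + Y = B * (1 + B⁻¹ * Y * B⁻¹) * B := by
    simp only [mul_add, add_mul, mul_one, hBB, ← mul_assoc, mul_nonsing_inv _ hB, one_mul]
    rw [mul_assoc, nonsing_inv_mul _ hB, mul_one]
  calc X.det = X.det * 1 := (mul_one _).symm
    _ ≤ X.det * (1 + B⁻¹ * Y * B⁻¹).det :=
      mul_le_mul_of_nonneg_left hM.one_le_det_one_add_s6 hX.det_pos.le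
    _ = (X + Y).det := by rw [hXY, det_mul, det_mul, ← hBB, det_mul]; ring

end Matrix

/-- For positive semi-definite `C, Z` and `α, β ≥ 0` with `α + β = 1`,
`det (Id + α C) * det (Id + β C + Z) ≥ det (Id + C) * det (Id + α Z)`. -/
theorem det_convex_split_ge {n : ℕ} (C Z : Matrix (Fin n) (Fin n) ℝ)
    (hC : C.PosSemidef) (hZ : Z.PosSemidef)
    (α β : ℝ) (hα : 0 ≤ α) (hβ : 0 ≤ β) (hαβ : α + β = 1) :
    (1 + C).det * (1 + α • Z).det ≤ (1 + α • C).det * (1 + β • C + Z).det := by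
  have hA : (1 + α • C).PosDef := PosDef.one.add_posSemidef (hC.smul hα)
  have hQ : (1 + α • Z).PosDef := PosDef.one.add_posSemidef (hZ.smul hα)
  have hQZ : ((1 + α • Z)⁻¹ * Z).PosSemidef :=
    (commute_inv_one_add_smul Z α).eq ▸ hZ.mul_inv_one_add_smul hα
  set A := 1 + α • C
  set Q := 1 + α • Z
  set R := (1 + C) * A⁻¹ + Z
  have hR : R.PosDef := by
    simpa only [R, add_mul, one_mul] using
      (hA.inv.add_posSemidef (hC.mul_inv_one_add_smul hα)).add_posSemidef hZ
  have hRA : R * A = Q * (1 + C + β • (Q⁻¹ * Z)) :=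
    mul_inv_add_mul_one_add_smul_eq_of_add_eq_one C Z hαβ hA.det_pos.ne'.isUnit
      hQ.det_pos.ne'.isUnit
  have hK : (C * A⁻¹ * C).PosSemidef := by
    have h := hA.inv.posSemidef.conjTranspose_mul_mul_same C
    rwa [hC.isHermitian.eq] at h
  calc (1 + C).det * Q.det ≤ (1 + C + β • (Q⁻¹ * Z)).det * Q.det :=
        mul_le_mul_of_nonneg_right ((PosDef.one.add_posSemidef hC).det_le_det_add (hQZ.smul hβ))
          hQ.det_pos.le
    _ = (Q * (1 + C + β • (Q⁻¹ * Z))).det := by rw [det_mul, mul_comm]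
    _ = R.det * A.det := by rw [← hRA, det_mul]
    _ ≤ (R + (α * β) • (C * A⁻¹ * C)).det * A.det :=
        mul_le_mul_of_nonneg_right (hR.det_le_det_add (hK.smul (mul_nonneg hα hβ)))
          hA.det_pos.le
    _ = A.det * (1 + β • C + Z).det := by
        rw [one_add_smul_eq_of_add_eq_one C hαβ hA.det_pos.ne'.isUnit, mul_comm]
        congr 2
        simp only [R]
        abel
end

section
/- Let C, Z be positive semi-definite n×n matrices, α ∈ (0,1), β = 1 − α. If det(Id + αC) · det(Id + βC + Z) = det(Id + C) · det(Id + αZ), then C = 0 and Z = 0. -/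
/-!
Put `A = 1 + α C` and `G = √(1 + α Z)`. Then
`1 + β C + Z = G (1 + C) A⁻¹ G + (β / α) ((G - A) A⁻¹ (G - A) + 2 (G - 1))`.
The first summand is positive definite with determinant `det (1 + C) det (1 + α Z) / det A`;
the second is positive semidefinite since `G ≥ 1`. Adding a positive semidefinite matrix to a
positive definite one leaves the determinant unchanged only if it is zero, so equality forces
`(G - A) A⁻¹ (G - A) = 0` and `G = 1`, that is `A = G = 1`.
-/

open Matrix
open scoped MatrixOrder ComplexOrder

lemma one_add_smul_add_eq_mul_mul_add_smul {K R : Type*} [Field K] [Ring R] [Algebra K R]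
    {a : K} (ha : a ≠ 0) {C Z G P : R} (hPl : P * (1 + a • C) = 1) (hPr : (1 + a • C) * P = 1)
    (hG : G * G = 1 + a • Z) :
    1 + (1 - a) • C + Z = G * ((1 + C) * P) * G
      + ((1 - a) / a) • ((G - (1 + a • C)) * P * (G - (1 + a • C)) + (2 : K) • (G - 1)) := by
  set A := 1 + a • C with hA
  have hN : (1 + C) * P = a⁻¹ • 1 + (1 - a⁻¹) • P := by
    have : 1 + C = a⁻¹ • A + (1 - a⁻¹) • 1 := by
      rw [hA]; match_scalars <;> field_simp; ring
    rw [this, add_mul, smul_mul_assoc, smul_mul_assoc, hPr, one_mul]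
  have hQ : (G - A) * P * (G - A) + (2 : K) • (G - 1) = G * P * G + a • C - 1 := by
    have : (G - A) * P * (G - A) = G * P * G - G * (P * A) - (A * P) * G + (A * P) * A := by
      noncomm_ring
    rw [this, hPl, hPr, hA, two_smul]; noncomm_ring
  rw [hN, hQ, mul_add, add_mul, mul_smul_comm, mul_smul_comm, smul_mul_assoc, smul_mul_assoc,
    mul_one, hG]
  match_scalars <;> field_simp <;> ring

namespace Matrix

variable {𝕜 m : Type*} [RCLike 𝕜] [Fintype m]

lemma PosDef.eq_zero_of_conjTranspose_mul_mul_eq_zero {n : Type*} [Fintype n]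
    {P : Matrix m m 𝕜} (hP : P.PosDef) {X : Matrix m n 𝕜} (h : Xᴴ * P * X = 0) : X = 0 := by
  classical
  refine ext_of_mulVec_single fun j => ?_
  rw [zero_mulVec]
  by_contra hne
  have hpos := hP.dotProduct_mulVec_pos hne
  rwa [star_mulVec, ← dotProduct_mulVec, mulVec_mulVec, mulVec_mulVec, h,
    zero_mulVec, dotProduct_zero, lt_self_iff_false] at hpos

lemma PosSemidef.mul_mul_of_isHermitian {P X : Matrix m m 𝕜} (hP : P.PosSemidef)
    (hX : X.IsHermitian) : (X * P * X).PosSemidef := by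
  simpa only [hX.eq] using hP.conjTranspose_mul_mul_same X

variable [DecidableEq m]

lemma IsHermitian.det_one_add_s7 {K : Matrix m m 𝕜} (hK : K.IsHermitian) :
    (1 + K).det = ∏ i, (1 + (hK.eigenvalues i : 𝕜)) := by
  have h : 1 + K = cfc (fun x : ℝ => 1 + x) K := by
    rw [cfc_const_add _ _ K, cfc_id' ℝ K, map_one]
  rw [h, hK.cfc_eq]
  simp [IsHermitian.cfc, -Unitary.conjStarAlgAut_apply]

lemma PosSemidef.eq_zero_of_det_one_add_eq_one {K : Matrix m m 𝕜} (hK : K.PosSemidef)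
    (h : (1 + K).det = 1) : K = 0 := by
  rw [← hK.1.eigenvalues_eq_zero_iff]
  by_contra hne
  obtain ⟨i, hi⟩ := Function.ne_iff.mp hne
  have hprod : ∏ j, (1 + hK.1.eigenvalues j) = 1 := by
    exact_mod_cast hK.1.det_one_add_s7 ▸ h
  have hlt : ∏ _j : m, (1 : ℝ) < ∏ j, (1 + hK.1.eigenvalues j) :=
    Finset.prod_lt_prod (fun _ _ => one_pos) (fun j _ => by linarith [hK.eigenvalues_nonneg j])
      ⟨i, Finset.mem_univ i, by linarith [(hK.eigenvalues_nonneg i).lt_of_ne' hi]⟩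
  simp [hprod] at hlt

lemma PosDef.eq_zero_of_det_add_eq {Y Q : Matrix m m 𝕜} (hY : Y.PosDef)
    (hQ : Q.PosSemidef) (h : (Y + Q).det = Y.det) : Q = 0 := by
  set R := CFC.sqrt Y
  have hRR : R * R = Y := CFC.sqrt_mul_sqrt_self Y hY.posSemidef.nonneg
  have hR : R.IsHermitian := (CFC.sqrt_nonneg Y).posSemidef.1
  have hRdet : R.det * R.det ≠ 0 := by rw [← det_mul, hRR]; exact hY.det_pos.ne'
  have hRu : IsUnit R.det := isUnit_iff_ne_zero.mpr (left_ne_zero_of_mul hRdet)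
  set K := R⁻¹ * Q * R⁻¹
  have hK : K.PosSemidef := hQ.mul_mul_of_isHermitian hR.inv
  have hQK : Q = R * K * R := by
    simp only [K, ← mul_assoc, mul_nonsing_inv R hRu, one_mul]
    rw [mul_assoc, nonsing_inv_mul R hRu, mul_one]
  have hYQ : Y + Q = R * (1 + K) * R := by rw [mul_add, add_mul, mul_one, hRR, ← hQK]
  have hdet : (1 + K).det = 1 := by
    rw [hYQ, ← hRR, det_mul, det_mul, det_mul] at h
    exact mul_left_cancel₀ hRdet (by linear_combination h)
  rw [hQK, hK.eq_zero_of_det_one_add_eq_one hdet, mul_zero, zero_mul]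

lemma one_le_cfc_sqrt_one_add {Z : Matrix m m 𝕜} (hZ : 0 ≤ Z) :
    1 ≤ cfc (fun x : ℝ => √(1 + x)) Z := by
  calc (1 : Matrix m m 𝕜) = cfc (fun _ : ℝ => (1 : ℝ)) Z := by simp [cfc_const_one ℝ Z]
    _ ≤ cfc (fun x : ℝ => √(1 + x)) Z :=
      cfc_mono fun x hx => Real.one_le_sqrt.mpr (by simpa using spectrum_nonneg_of_nonneg hZ hx)

lemma cfc_sqrt_one_add_mul_self {Z : Matrix m m 𝕜} (hZ : 0 ≤ Z) :
    cfc (fun x : ℝ => √(1 + x)) Z * cfc (fun x : ℝ => √(1 + x)) Z = 1 + Z := by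
  rw [← cfc_mul .., cfc_congr (g := fun x => 1 + x), cfc_const_add _ _ Z, cfc_id' ℝ Z, map_one]
  intro x hx
  exact Real.mul_self_sqrt (by linarith [spectrum_nonneg_of_nonneg hZ hx])

lemma PosSemidef.one_add_mul_inv_one_add_smul {C : Matrix m m 𝕜} (hC : C.PosSemidef) {a : ℝ}
    (ha : 0 ≤ a) : ((1 + C) * (1 + a • C)⁻¹).PosSemidef := by
  set A := 1 + a • C
  have hA : A.PosDef := PosDef.one.add_posSemidef (hC.smul ha)
  have hAC : (A * (1 + C)).PosSemidef := by
    have : A * (1 + C) = 1 + ((1 + a) • C + a • (Cᴴ * C)) := by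
      rw [hC.1.eq]; simp only [A, add_mul, one_mul, mul_add, mul_one, smul_mul_assoc]; module
    rw [this]
    exact PosSemidef.one.add ((hC.smul (by linarith)).add
      ((posSemidef_conjTranspose_mul_self C).smul ha))
  have hu : IsUnit A.det := isUnit_iff_ne_zero.mpr hA.det_pos.ne'
  have : (1 + C) * A⁻¹ = (A⁻¹)ᴴ * (A * (1 + C)) * A⁻¹ := by
    rw [conjTranspose_nonsing_inv, hA.1.eq, ← Matrix.mul_assoc, nonsing_inv_mul A hu, one_mul]
  rw [this]
  exact hAC.conjTranspose_mul_mul_same _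

lemma PosDef.posSemidef_sub_mul_inv_mul_sub_add_two_smul {A G : Matrix m m 𝕜} (hA : A.PosDef)
    (hG : G.IsHermitian) (hG1 : (G - 1).PosSemidef) :
    ((G - A) * A⁻¹ * (G - A) + (2 : ℝ) • (G - 1)).PosSemidef :=
  (hA.inv.posSemidef.mul_mul_of_isHermitian (hG.sub hA.1)).add (hG1.smul zero_le_two)

lemma PosDef.eq_one_of_sub_mul_inv_mul_sub_add_two_smul_eq_zero {A G : Matrix m m 𝕜}
    (hA : A.PosDef) (hG : G.IsHermitian) (hG1 : (G - 1).PosSemidef)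
    (h : (G - A) * A⁻¹ * (G - A) + (2 : ℝ) • (G - 1) = 0) : G = 1 ∧ A = 1 := by
  obtain ⟨hT0, hG0⟩ := (add_eq_zero_iff_of_nonneg
    (hA.inv.posSemidef.mul_mul_of_isHermitian (hG.sub hA.1)).nonneg
    (hG1.smul zero_le_two).nonneg).mp h
  have hGA : G - A = 0 :=
    hA.inv.eq_zero_of_conjTranspose_mul_mul_eq_zero (by rw [(hG.sub hA.1).eq]; exact hT0)
  have hG' : G = 1 := by simpa [sub_eq_zero] using hG0
  exact ⟨hG', hG' ▸ (sub_eq_zero.mp hGA).symm⟩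

end Matrix

/-- Equality case: for positive semi-definite `C, Z` and `α ∈ (0,1)`, `β = 1 - α`,
equality `det (Id + α C) * det (Id + β C + Z) = det (Id + C) * det (Id + α Z)`
forces `C = 0` and `Z = 0`. -/
theorem det_convex_split_eq_iff {n : ℕ} (C Z : Matrix (Fin n) (Fin n) ℝ)
    (hC : C.PosSemidef) (hZ : Z.PosSemidef)
    (α β : ℝ) (hα0 : 0 < α) (hα1 : α < 1) (hβ : β = 1 - α)
    (heq : (1 + α • C).det * (1 + β • C + Z).det = (1 + C).det * (1 + α • Z).det) :
    C = 0 ∧ Z = 0 := by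
  subst hβ
  set A := 1 + α • C
  set G := cfc (fun x : ℝ => √(1 + x)) (α • Z)
  have hαZ : 0 ≤ α • Z := (hZ.smul hα0.le).nonneg
  have hGG : G * G = 1 + α • Z := cfc_sqrt_one_add_mul_self hαZ
  have hGh : G.IsHermitian := cfc_predicate _ _
  have hG1 : (G - 1).PosSemidef := le_iff.mp (one_le_cfc_sqrt_one_add hαZ)
  have hA : A.PosDef := PosDef.one.add_posSemidef (hC.smul hα0.le)
  have hAu : IsUnit A.det := isUnit_iff_ne_zero.mpr hA.det_pos.ne'
  have hdet : (G * ((1 + C) * A⁻¹) * G).det = (1 + (1 - α) • C + Z).det := by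
    refine mul_left_cancel₀ hAu.ne_zero (heq ▸ ?_)
    rw [← hGG, det_mul, det_mul, det_mul, det_mul, det_nonsing_inv, Ring.inverse_eq_inv']
    field_simp [hAu.ne_zero]
  have hY : (G * ((1 + C) * A⁻¹) * G).PosDef := by
    refine (PosSemidef.posDef_iff_det_ne_zero ?_).mpr (hdet ▸ ?_)
    · exact (hC.one_add_mul_inv_one_add_smul hα0.le).mul_mul_of_isHermitian hGh
    · exact ((PosDef.one.add_posSemidef (hC.smul (sub_nonneg.mpr hα1.le))).add_posSemidef
        hZ).det_pos.ne'
  have hr : 0 < (1 - α) / α := div_pos (sub_pos.mpr hα1) hα0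
  have hQ := hY.eq_zero_of_det_add_eq
    ((hA.posSemidef_sub_mul_inv_mul_sub_add_two_smul hGh hG1).smul hr.le)
    (by rw [← one_add_smul_add_eq_mul_mul_add_smul hα0.ne' (nonsing_inv_mul A hAu)
      (mul_nonsing_inv A hAu) hGG, hdet])
  obtain ⟨hG, hA1⟩ := hA.eq_one_of_sub_mul_inv_mul_sub_add_two_smul_eq_zero hGh hG1
    ((smul_eq_zero.mp hQ).resolve_left hr.ne')
  exact ⟨by simpa [hα0.ne', A] using hA1, by simpa [hα0.ne', hG] using hGG⟩
end

section
/- Let A₁, A₂, C be positive semi-definite n×n matrices and B = [[B₁, B₂],[B₂*, B₄]] a positive semi-definite 2n×2n matrix, and let a, b be real numbers with |a| ≥ 1, |b| ≥ 1 and |a+b| ≥ 1. If diag(A₁, A₂) ≥ B + [[a²C, abC],[abC, b²C]] in the Loewner order, then det(Id + A₁)·det(Id + A₂) ≥ det(Id + C)·det(Id + B̄ + ((a+b)² − 1)C), where B̄ = B₁ + B₂ + B₂* + B₄. In particular det(Id + A₁)·det(Id + A₂) ≥ det(Id + C)·det(Id + B̄). -/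
open Matrix
open scoped MatrixOrder ComplexOrder

/-!
Compressing the Loewner hypothesis to the two diagonal blocks and along `x ↦ (x, x)` gives
`C ≤ B₁ + a²C ≤ A₁`, `C ≤ B₄ + b²C ≤ A₂` and `B̄ + (a+b)²C ≤ A₁ + A₂`.
The determinant is log-supermodular on positive definite matrices:
`det D · det (A + B - D) ≤ det A · det B` whenever `D ≤ A, B`. Writing `B = D + T²`, this reads
`det (1 + T A⁻¹ T) ≤ det (1 + T D⁻¹ T)`, which follows from `A⁻¹ ≤ D⁻¹` and the monotonicity of
`det`. Take `D = 1 + C`, `A = 1 + A₁`, `B = 1 + A₂`; then `A + B - D ≥ 1 + B̄ + ((a+b)² - 1)C`.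
-/

namespace Matrix

theorem inv_sub_inv_eq {R : Type*} [CommRing R] {m : Type*} [Fintype m] [DecidableEq m]
    {A B : Matrix m m R} (hA : IsUnit A.det) (hB : IsUnit B.det) :
    A⁻¹ - B⁻¹ = B⁻¹ * ((B - A) + (B - A) * A⁻¹ * (B - A)) * B⁻¹ := by
  have h₁ : B⁻¹ * (B - A) = 1 - B⁻¹ * A := by rw [Matrix.mul_sub, nonsing_inv_mul _ hB]
  have h₂ : (B - A) * B⁻¹ = 1 - A * B⁻¹ := by rw [Matrix.sub_mul, mul_nonsing_inv _ hB]
  calc A⁻¹ - B⁻¹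
      = (1 - B⁻¹ * A) * B⁻¹ + (1 - B⁻¹ * A) * A⁻¹ * (1 - A * B⁻¹) := by
        simp only [Matrix.sub_mul, Matrix.mul_sub, Matrix.one_mul, Matrix.mul_one, Matrix.mul_assoc,
          nonsing_inv_mul_cancel_left _ _ hA, mul_nonsing_inv _ hA]
        abel
    _ = B⁻¹ * ((B - A) + (B - A) * A⁻¹ * (B - A)) * B⁻¹ := by
        rw [← h₁, ← h₂]
        simp only [Matrix.mul_add, Matrix.add_mul, Matrix.mul_assoc]

section Loewner

variable {𝕜 : Type*} [RCLike 𝕜] {m n : Type*}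

theorem le_of_fromBlocks_le₁₁ [Fintype n] {A A' : Matrix m m 𝕜} {B B' : Matrix m n 𝕜}
    {C C' : Matrix n m 𝕜} {D D' : Matrix n n 𝕜}
    (h : fromBlocks A B C D ≤ fromBlocks A' B' C' D') : A ≤ A' :=
  (le_iff.mp h).submatrix Sum.inl

theorem le_of_fromBlocks_le₂₂ [Fintype m] {A A' : Matrix m m 𝕜} {B B' : Matrix m n 𝕜}
    {C C' : Matrix n m 𝕜} {D D' : Matrix n n 𝕜}
    (h : fromBlocks A B C D ≤ fromBlocks A' B' C' D') : D ≤ D' :=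
  (le_iff.mp h).submatrix Sum.inr

theorem add_add_add_le_of_fromBlocks_le [Fintype m] [DecidableEq m]
    {A A' B B' C C' D D' : Matrix m m 𝕜} (h : fromBlocks A B C D ≤ fromBlocks A' B' C' D') :
    A + B + C + D ≤ A' + B' + C' + D' := by
  have := (le_iff.mp h).conjTranspose_mul_mul_same (fromRows (1 : Matrix m m 𝕜) 1)
  rw [le_iff]
  convert this using 1
  simp only [sub_eq_add_neg, neg_add_rev, conjTranspose_fromRows_eq_fromCols_conjTranspose,
    conjTranspose_one, fromBlocks_neg, fromBlocks_add, fromCols_mul_fromBlocks, one_mul,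
    fromCols_mul_fromRows, mul_one]
  abel

variable {A B : Matrix m m 𝕜}

theorem PosSemidef.le_smul_self {c : ℝ} (hA : A.PosSemidef) (hc : 1 ≤ c) : A ≤ c • A := by
  rw [le_iff, show c • A - A = (c - 1) • A by module]
  exact hA.smul (sub_nonneg.mpr hc)

theorem PosDef.of_le (hA : A.PosDef) (h : A ≤ B) : B.PosDef := by
  simpa using hA.add_posSemidef (le_iff.mp h)

variable [Fintype m] [DecidableEq m]

theorem inv_le_inv_of_le (hA : A.PosDef) (h : A ≤ B) : B⁻¹ ≤ A⁻¹ := by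
  have hB := hA.of_le h
  have hX : 0 ≤ B - A := sub_nonneg.mpr h
  rw [le_iff, inv_sub_inv_eq hA.det_pos.ne'.isUnit hB.det_pos.ne'.isUnit, ← nonneg_iff_posSemidef]
  refine hB.inv.isHermitian.isSelfAdjoint.conjugate_nonneg (add_nonneg hX ?_)
  exact (IsSelfAdjoint.of_nonneg hX).conjugate_nonneg hA.inv.posSemidef.nonneg

theorem exists_nonneg_eq_add_mul_self_of_le (h : A ≤ B) : ∃ T, 0 ≤ T ∧ B = A + T * T :=
  ⟨CFC.sqrt (B - A), CFC.sqrt_nonneg _, by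
    rw [CFC.sqrt_mul_sqrt_self _ (sub_nonneg.mpr h), add_sub_cancel]⟩

end Loewner

section Det

variable {m : Type*} [Fintype m] [DecidableEq m] {A B D : Matrix m m ℝ}

theorem one_le_det_of_one_le_s8 (h : 1 ≤ A) : 1 ≤ A.det := by
  have hA : A.IsHermitian := by
    simpa using (PosSemidef.one.add (le_iff.mp h)).isHermitian
  rw [hA.det_eq_prod_eigenvalues]
  refine Finset.one_le_prod fun i _ => ?_
  exact (CFC.one_le_iff A hA.isSelfAdjoint).mp h _ (hA.eigenvalues_mem_spectrum_real i)

theorem det_le_det_of_le_s8 (hA : A.PosDef) (h : A ≤ B) : A.det ≤ B.det := by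
  obtain ⟨T, hT, rfl⟩ := exists_nonneg_eq_add_mul_self_of_le h
  rw [det_add_mul _ _ hA.det_pos.ne'.isUnit]
  refine le_mul_of_one_le_right hA.det_pos.le (one_le_det_of_one_le_s8 ?_)
  exact le_add_of_nonneg_right (conjugate_nonneg_of_nonneg hA.inv.posSemidef.nonneg hT)

theorem det_mul_det_add_sub_le (hD : D.PosDef) (hA : D ≤ A) (hB : D ≤ B) :
    D.det * (A + B - D).det ≤ A.det * B.det := by
  have hA' : A.PosDef := hD.of_le hA
  obtain ⟨T, hT, rfl⟩ := exists_nonneg_eq_add_mul_self_of_le hB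
  have hconj : 1 + T * A⁻¹ * T ≤ 1 + T * D⁻¹ * T := by
    gcongr
    exact conjugate_le_conjugate_of_nonneg (inv_le_inv_of_le hD hA) hT
  have hmono : (1 + T * A⁻¹ * T).det ≤ (1 + T * D⁻¹ * T).det := by
    refine det_le_det_of_le_s8 (PosDef.one.add_posSemidef ?_) hconj
    exact (conjugate_nonneg_of_nonneg hA'.inv.posSemidef.nonneg hT).posSemidef
  rw [show A + (D + T * T) - D = A + T * T by abel, det_add_mul _ _ hA'.det_pos.ne'.isUnit,
    det_add_mul _ _ hD.det_pos.ne'.isUnit, mul_left_comm]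
  exact mul_le_mul_of_nonneg_left (mul_le_mul_of_nonneg_left hmono hD.det_pos.le) hA'.det_pos.le

theorem det_mul_det_le_of_le_add_sub {M : Matrix m m ℝ} (hD : D.PosDef) (hA : D ≤ A) (hB : D ≤ B)
    (hM : M.PosDef) (h : M ≤ A + B - D) : D.det * M.det ≤ A.det * B.det :=
  (mul_le_mul_of_nonneg_left (det_le_det_of_le_s8 hM h) hD.det_pos.le).trans
    (det_mul_det_add_sub_le hD hA hB)

end Det

end Matrix

theorem gaussian_GCRSI_general {n : ℕ} (A₁ A₂ C B₁ B₂ B₄ : Matrix (Fin n) (Fin n) ℝ)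
    (hC : C.PosSemidef)
    (hB : (Matrix.fromBlocks B₁ B₂ B₂ᵀ B₄).PosSemidef)
    (a b : ℝ) (ha : 1 ≤ |a|) (hb : 1 ≤ |b|) (hab : 1 ≤ |a + b|)
    (hLoewner : (Matrix.fromBlocks A₁ 0 0 A₂ -
        (Matrix.fromBlocks B₁ B₂ B₂ᵀ B₄ +
          Matrix.fromBlocks (a ^ 2 • C) ((a * b) • C) ((a * b) • C) (b ^ 2 • C))).PosSemidef) :
    (1 + C).det * (1 + (B₁ + B₂ + B₂ᵀ + B₄) + ((a + b) ^ 2 - 1) • C).det ≤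
        (1 + A₁).det * (1 + A₂).det ∧
      (1 + C).det * (1 + (B₁ + B₂ + B₂ᵀ + B₄)).det ≤ (1 + A₁).det * (1 + A₂).det := by
  have hL : fromBlocks (B₁ + a ^ 2 • C) (B₂ + (a * b) • C) (B₂ᵀ + (a * b) • C) (B₄ + b ^ 2 • C)
      ≤ fromBlocks A₁ 0 0 A₂ := by
    rwa [le_iff, ← fromBlocks_add]
  have hB₀ : fromBlocks 0 0 0 0 ≤ fromBlocks B₁ B₂ B₂ᵀ B₄ := by
    rwa [fromBlocks_zero, nonneg_iff_posSemidef]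
  have hA₁ : C ≤ A₁ := calc
    C ≤ a ^ 2 • C := hC.le_smul_self ((one_le_sq_iff_one_le_abs a).mpr ha)
    _ ≤ B₁ + a ^ 2 • C := le_add_of_nonneg_left (le_of_fromBlocks_le₁₁ hB₀)
    _ ≤ A₁ := le_of_fromBlocks_le₁₁ hL
  have hA₂ : C ≤ A₂ := calc
    C ≤ b ^ 2 • C := hC.le_smul_self ((one_le_sq_iff_one_le_abs b).mpr hb)
    _ ≤ B₄ + b ^ 2 • C := le_add_of_nonneg_left (le_of_fromBlocks_le₂₂ hB₀)
    _ ≤ A₂ := le_of_fromBlocks_le₂₂ hL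
  have hsum : B₁ + B₂ + B₂ᵀ + B₄ + (a + b) ^ 2 • C ≤ A₁ + A₂ := by
    convert add_add_add_le_of_fromBlocks_le hL using 1 <;> module
  have hmid : 1 + (B₁ + B₂ + B₂ᵀ + B₄) + ((a + b) ^ 2 - 1) • C ≤
      1 + A₁ + (1 + A₂) - (1 + C) := calc
    _ = 1 + (B₁ + B₂ + B₂ᵀ + B₄ + (a + b) ^ 2 • C) - C := by module
    _ ≤ 1 + (A₁ + A₂) - C := by gcongr
    _ = 1 + A₁ + (1 + A₂) - (1 + C) := by abel
  have hle : 1 + (B₁ + B₂ + B₂ᵀ + B₄) ≤ 1 + (B₁ + B₂ + B₂ᵀ + B₄) + ((a + b) ^ 2 - 1) • C :=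
    le_add_of_nonneg_right (hC.smul (sub_nonneg.mpr ((one_le_sq_iff_one_le_abs _).mpr hab))).nonneg
  have hBbar : (1 + (B₁ + B₂ + B₂ᵀ + B₄)).PosDef := PosDef.one.add_posSemidef <|
    nonneg_iff_posSemidef.mp (by simpa using add_add_add_le_of_fromBlocks_le hB₀)
  have hD : (1 + C).PosDef := PosDef.one.add_posSemidef hC
  have hA₁' : 1 + C ≤ 1 + A₁ := add_le_add_right hA₁ 1
  have hA₂' : 1 + C ≤ 1 + A₂ := add_le_add_right hA₂ 1
  exact ⟨det_mul_det_le_of_le_add_sub hD hA₁' hA₂' (hBbar.of_le hle) hmid,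
    det_mul_det_le_of_le_add_sub hD hA₁' hA₂' hBbar (hle.trans hmid)⟩

/-- Gaussian saturation in the GCRSI: if `diag (A₁, A₂) ≥ B + [[a²C, abC],[abC, b²C]]`
with `A₁, A₂, C ≥ 0`, `B ≥ 0` (in `n × n` blocks `B₁, B₂, B₂ᵀ, B₄`) and
`|a|, |b|, |a+b| ≥ 1`, then, with `B̄ = B₁ + B₂ + B₂ᵀ + B₄`,
`det (Id + A₁) det (Id + A₂) ≥ det (Id + C) det (Id + B̄ + ((a+b)² - 1) C)`, and in particular
`det (Id + A₁) det (Id + A₂) ≥ det (Id + C) det (Id + B̄)`. -/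
theorem gaussian_GCRSI {n : ℕ} (A₁ A₂ C B₁ B₂ B₄ : Matrix (Fin n) (Fin n) ℝ)
    (hA₁ : A₁.PosSemidef) (hA₂ : A₂.PosSemidef) (hC : C.PosSemidef)
    (hB : (Matrix.fromBlocks B₁ B₂ B₂ᵀ B₄).PosSemidef)
    (a b : ℝ) (ha : 1 ≤ |a|) (hb : 1 ≤ |b|) (hab : 1 ≤ |a + b|)
    (hLoewner : (Matrix.fromBlocks A₁ 0 0 A₂ -
        (Matrix.fromBlocks B₁ B₂ B₂ᵀ B₄ +
          Matrix.fromBlocks (a ^ 2 • C) ((a * b) • C) ((a * b) • C) (b ^ 2 • C))).PosSemidef) :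
    (1 + C).det * (1 + (B₁ + B₂ + B₂ᵀ + B₄) + ((a + b) ^ 2 - 1) • C).det ≤
        (1 + A₁).det * (1 + A₂).det ∧
      (1 + C).det * (1 + (B₁ + B₂ + B₂ᵀ + B₄)).det ≤ (1 + A₁).det * (1 + A₂).det :=
  gaussian_GCRSI_general A₁ A₂ C B₁ B₂ B₄ hC hB a b ha hb hab hLoewner
end

section
/- Let a, b, c, d : (0,∞) → [0,∞) be measurable functions satisfying a(t)·b(s) ≤ c(max(t,s))·d(min(t,s)) for all t, s > 0. Then (∫₀^∞ a)(∫₀^∞ b) ≤ (∫₀^∞ c)(∫₀^∞ d). -/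
/-!
Integrating over the product square, `(∫ a)(∫ b)` is half the integral of the symmetrization
`a x b y + a y b x`, and likewise for `c, d`. So it suffices to have the pointwise two-point inequality
`a x b y + a y b x ≤ c x d y + c y d x`. For `x ≤ y` both terms on the left are at most `M = c y d x`,
and their product `(a x b x)(a y b y)` is at most `M N` with `N = c x d y`; since `(M - u)(M - v) ≥ 0`,
this forces `u + v ≤ M + N`.
-/

open MeasureTheory
open scoped ENNReal

namespace ENNReal

theorem add_le_add_of_le_of_le_of_mul_le {u v M N : ℝ≥0∞} (hu : u ≤ M) (hv : v ≤ M)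
    (huv : u * v ≤ M * N) : u + v ≤ M + N := by
  rcases eq_or_ne M ⊤ with rfl | hM
  · simp
  rcases eq_or_ne N ⊤ with rfl | hN
  · simp
  lift M to NNReal using hM
  lift N to NNReal using hN
  lift u to NNReal using ne_top_of_le_ne_top coe_ne_top hu
  lift v to NNReal using ne_top_of_le_ne_top coe_ne_top hv
  simp only [← coe_mul, ← coe_add, coe_le_coe, ← NNReal.coe_le_coe, NNReal.coe_mul,
    NNReal.coe_add] at hu hv huv ⊢
  rcases M.coe_nonneg.eq_or_lt with hM0 | hM0
  · nlinarith [u.coe_nonneg, v.coe_nonneg, N.coe_nonneg]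
  · nlinarith [mul_nonneg (sub_nonneg.2 hu) (sub_nonneg.2 hv)]

end ENNReal

section FourFunctions

variable {α : Type*} {a b c d : α → ℝ≥0∞}

theorem mul_add_mul_swap_le_of_four_functions [LinearOrder α] {s : Set α}
    (h : ∀ t ∈ s, ∀ u ∈ s, a t * b u ≤ c (max t u) * d (min t u)) {x y : α}
    (hx : x ∈ s) (hy : y ∈ s) : a x * b y + a y * b x ≤ c x * d y + c y * d x := by
  wlog hxy : x ≤ y generalizing x y
  · simpa only [add_comm] using this hy hx (le_of_not_ge hxy)
  have hxx := h x hx x hx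
  have hyy := h y hy y hy
  simp only [max_self, min_self] at hxx hyy
  rw [add_comm (c x * d y)]
  refine ENNReal.add_le_add_of_le_of_le_of_mul_le ?_ ?_ ?_
  · simpa [hxy] using h x hx y hy
  · simpa [hxy] using h y hy x hx
  · calc a x * b y * (a y * b x) = a x * b x * (a y * b y) := by ring
      _ ≤ c x * d x * (c y * d y) := mul_le_mul' hxx hyy
      _ = c y * d x * (c x * d y) := by ring

variable [MeasurableSpace α] {μ : Measure α} [SFinite μ]

theorem lintegral_prod_mul_add_mul_swap (ha : AEMeasurable a μ) (hb : AEMeasurable b μ) :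
    ∫⁻ p, (a p.1 * b p.2 + a p.2 * b p.1) ∂μ.prod μ = 2 * ((∫⁻ x, a x ∂μ) * ∫⁻ y, b y ∂μ) := by
  have hab : AEMeasurable (fun p : α × α => a p.1 * b p.2) (μ.prod μ) :=
    ha.comp_fst.mul hb.comp_snd
  have hswap : ∫⁻ p, a p.2 * b p.1 ∂μ.prod μ = ∫⁻ p, a p.1 * b p.2 ∂μ.prod μ :=
    lintegral_prod_swap (fun p : α × α => a p.1 * b p.2)
  rw [lintegral_add_left' hab, hswap, lintegral_prod_mul ha hb, two_mul]

theorem lintegral_mul_le_of_four_functions [LinearOrder α] {s : Set α} (hs : ∀ᵐ x ∂μ, x ∈ s)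
    (ha : AEMeasurable a μ) (hb : AEMeasurable b μ) (hc : AEMeasurable c μ)
    (hd : AEMeasurable d μ) (h : ∀ t ∈ s, ∀ u ∈ s, a t * b u ≤ c (max t u) * d (min t u)) :
    (∫⁻ x, a x ∂μ) * (∫⁻ y, b y ∂μ) ≤ (∫⁻ x, c x ∂μ) * ∫⁻ y, d y ∂μ := by
  have hs₂ : ∀ᵐ p ∂μ.prod μ, p.1 ∈ s ∧ p.2 ∈ s :=
    (Measure.quasiMeasurePreserving_fst.ae hs).and (Measure.quasiMeasurePreserving_snd.ae hs)
  rw [← ENNReal.mul_le_mul_iff_right two_ne_zero ENNReal.ofNat_ne_top,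
    ← lintegral_prod_mul_add_mul_swap ha hb, ← lintegral_prod_mul_add_mul_swap hc hd]
  refine lintegral_mono_ae (hs₂.mono fun p hp => ?_)
  exact mul_add_mul_swap_le_of_four_functions h hp.1 hp.2

end FourFunctions

/-- Multiplicative four functions theorem on `(0, ∞)` (Ahlswede–Daykin type):
if `a t * b s ≤ c (max t s) * d (min t s)` for all `t, s > 0`, then
`(∫₀^∞ a) (∫₀^∞ b) ≤ (∫₀^∞ c) (∫₀^∞ d)`. -/
theorem four_functions_Ioi (a b c d : ℝ → ENNReal)
    (ha : Measurable a) (hb : Measurable b) (hc : Measurable c) (hd : Measurable d)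
    (h : ∀ t s : ℝ, 0 < t → 0 < s → a t * b s ≤ c (max t s) * d (min t s)) :
    (∫⁻ t in Set.Ioi (0 : ℝ), a t) * (∫⁻ s in Set.Ioi (0 : ℝ), b s) ≤
      (∫⁻ p in Set.Ioi (0 : ℝ), c p) * (∫⁻ q in Set.Ioi (0 : ℝ), d q) :=
  lintegral_mul_le_of_four_functions (ae_restrict_mem measurableSet_Ioi) ha.aemeasurable
    hb.aemeasurable hc.aemeasurable hd.aemeasurable fun t ht u hu => h t u ht hu
end

section
/- For n = 1, there is no constant C₁ > 0, C₂, C₃ ≥ 1 such that γ(K∩L)·γ(C₁(K+L)) ≤ C₂·γ(C₃K)·γ(C₃L) holds for all origin-symmetric convex sets K, L ⊂ ℝ²: explicitly, taking K = {|x₁| ≤ a} and L = U_θ(K) a rotation of K by angle θ > 0, one has K + U_θ(K) = ℝ², while γ(K ∩ U_θ(K)) → γ(K) as θ → 0, so for a small enough the inequality fails for small θ. -/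
/-!
Take the thin slabs `K = {|x₁| ≤ a}` and `L = U_θ K` with `θ = a / 2`. Their normals are
independent, so `K + L = ℝ²` and the left-hand side is `γ(K ∩ L) ≥ a / 18`, as `K ∩ L` contains
the rectangle `[-a/2, a/2] × [-1, 1]`. The image of `γ` under a unit linear form is the standard
normal law, whose density is at most `1/2`, so a slab of half-width `r` has measure at most `r`
and the right-hand side is at most `C₂ (C₃ a)²`. This fails for small `a`.
-/

open MeasureTheory Set Pointwise

/-- The standard Gaussian probability measure on `ℝ²`. -/
noncomputable def stdGaussian2 : Measure (EuclideanSpace ℝ (Fin 2)) :=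
  volume.withDensity fun x =>
    ENNReal.ofReal ((2 * Real.pi) ^ (-(2 : ℝ) / 2) * Real.exp (-‖x‖ ^ 2 / 2))

open ProbabilityTheory
open scoped ENNReal RealInnerProductSpace

section Slab

variable {E : Type*} [NormedAddCommGroup E] [InnerProductSpace ℝ E]

def slab (u : E) (r : ℝ) : Set E := {x | |⟪u, x⟫| ≤ r}

lemma slab_eq_preimage_Icc (u : E) (r : ℝ) : slab u r = (fun x => ⟪u, x⟫) ⁻¹' Icc (-r) r := by
  ext x; exact abs_le (a := ⟪u, x⟫)

lemma convex_slab (u : E) (r : ℝ) : Convex ℝ (slab u r) := by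
  rw [slab_eq_preimage_Icc]
  exact (convex_Icc _ _).linear_preimage (innerSL ℝ u).toLinearMap

lemma neg_slab (u : E) (r : ℝ) : -slab u r = slab u r := by
  ext x; simp [slab, inner_neg_right]

lemma smul_slab {c : ℝ} (hc : 0 < c) (u : E) (r : ℝ) : c • slab u r = slab u (c * r) := by
  ext x
  rw [mem_smul_set_iff_inv_smul_mem₀ hc.ne']
  simp only [slab, mem_ofPred_eq, inner_smul_right, abs_mul, abs_inv, abs_of_pos hc,
    inv_mul_le_iff₀ hc]

/-- Write `x = y + (x - y)` with `y ∈ ℝ f` chosen so that `⟪u, x - y⟫ = 0`. -/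
lemma slab_add_slab_eq_univ {e u f : E} (hef : ⟪e, f⟫ = 0) (huf : ⟪u, f⟫ ≠ 0) {r : ℝ}
    (hr : 0 ≤ r) : slab e r + slab u r = univ := by
  refine eq_univ_of_forall fun x => ?_
  set y := (⟪u, x⟫ / ⟪u, f⟫) • f
  refine ⟨y, ?_, x - y, ?_, add_sub_cancel y x⟩
  · simp [slab, y, inner_smul_right, hef, hr]
  · simp [slab, y, inner_sub_right, inner_smul_right, div_mul_cancel₀ _ huf, hr]

variable [FiniteDimensional ℝ E] [MeasurableSpace E] [BorelSpace E]

lemma stdGaussian_map_inner {u : E} (hu : ‖u‖ = 1) :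
    (stdGaussian E).map (fun x => ⟪u, x⟫) = gaussianReal 0 1 := by
  have h := IsGaussian.map_eq_gaussianReal (μ := stdGaussian E) (innerSL ℝ u)
  rw [integral_strongDual_stdGaussian, variance_dual_stdGaussian, innerSL_apply_norm, hu] at h
  simpa using h

lemma stdGaussian_slab {u : E} (hu : ‖u‖ = 1) (r : ℝ) :
    stdGaussian E (slab u r) = gaussianReal 0 1 (Icc (-r) r) := by
  rw [← stdGaussian_map_inner hu, Measure.map_apply (by fun_prop) measurableSet_Icc,
    slab_eq_preimage_Icc]

end Slab

lemma two_le_sqrt_two_mul_pi : 2 ≤ √(2 * Real.pi) :=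
  Real.le_sqrt_of_sq_le (by nlinarith [Real.pi_gt_three])

lemma sqrt_two_mul_pi_le_three : √(2 * Real.pi) ≤ 3 :=
  Real.sqrt_le_iff.2 ⟨by norm_num, by nlinarith [Real.pi_lt_d2]⟩

lemma gaussianPDFReal_zero_one_le_half (x : ℝ) : gaussianPDFReal 0 1 x ≤ 1 / 2 := by
  rw [gaussianPDFReal, NNReal.coe_one, mul_one, one_div]
  calc (√(2 * Real.pi))⁻¹ * Real.exp (-(x - 0) ^ 2 / (2 * 1))
      ≤ (√(2 * Real.pi))⁻¹ * 1 := by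
        gcongr; exact Real.exp_le_one_iff.2 (by nlinarith [sq_nonneg x])
    _ ≤ 2⁻¹ := by rw [mul_one]; exact inv_anti₀ two_pos two_le_sqrt_two_mul_pi

lemma one_sixth_le_gaussianPDFReal_zero_one {x : ℝ} (hx : |x| ≤ 1) :
    1 / 6 ≤ gaussianPDFReal 0 1 x := by
  rw [gaussianPDFReal, NNReal.coe_one, mul_one]
  have hx2 : x ^ 2 ≤ 1 := by nlinarith [sq_abs x, abs_nonneg x]
  calc (1 / 6 : ℝ) = 3⁻¹ * (1 / 2) := by norm_num
    _ ≤ (√(2 * Real.pi))⁻¹ * Real.exp (-(x - 0) ^ 2 / (2 * 1)) := by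
      gcongr
      · exact sqrt_two_mul_pi_le_three
      · linarith [Real.add_one_le_exp (-(x - 0) ^ 2 / (2 * 1))]

lemma gaussianReal_Icc_le (r : ℝ) : gaussianReal 0 1 (Icc (-r) r) ≤ ENNReal.ofReal r := by
  calc gaussianReal 0 1 (Icc (-r) r) ≤ ∫⁻ _ in Icc (-r) r, ENNReal.ofReal (1 / 2) := by
        rw [gaussianReal_apply 0 one_ne_zero]
        exact lintegral_mono fun x => ENNReal.ofReal_le_ofReal (gaussianPDFReal_zero_one_le_half x)
    _ = ENNReal.ofReal r := by
        rw [setLIntegral_const, Real.volume_Icc, ← ENNReal.ofReal_mul (by norm_num)]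
        ring_nf

lemma ofReal_div_three_le_gaussianReal_Icc {r : ℝ} (hr : r ≤ 1) :
    ENNReal.ofReal (r / 3) ≤ gaussianReal 0 1 (Icc (-r) r) := by
  calc ENNReal.ofReal (r / 3) = ∫⁻ _ in Icc (-r) r, ENNReal.ofReal (1 / 6) := by
        rw [setLIntegral_const, Real.volume_Icc, ← ENNReal.ofReal_mul (by norm_num)]
        ring_nf
    _ ≤ gaussianReal 0 1 (Icc (-r) r) := by
        rw [gaussianReal_apply 0 one_ne_zero]
        refine setLIntegral_mono (measurable_gaussianPDF 0 1) fun x hx => ?_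
        exact ENNReal.ofReal_le_ofReal (one_sixth_le_gaussianPDFReal_zero_one
          (abs_le.2 ⟨by linarith [hx.1], hx.2.trans hr⟩))

noncomputable def euclideanOfProd : ℝ × ℝ ≃ᵐ EuclideanSpace ℝ (Fin 2) :=
  MeasurableEquiv.finTwoArrow.symm.trans (MeasurableEquiv.toLp 2 (Fin 2 → ℝ))

@[simp] lemma euclideanOfProd_apply_zero (p : ℝ × ℝ) : euclideanOfProd p 0 = p.1 := rfl

@[simp] lemma euclideanOfProd_apply_one (p : ℝ × ℝ) : euclideanOfProd p 1 = p.2 := rfl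

lemma measurePreserving_euclideanOfProd : MeasurePreserving euclideanOfProd volume volume :=
  (volume_preserving_finTwoArrow ℝ).symm.trans
    (EuclideanSpace.volume_preserving_symm_measurableEquiv_toLp (Fin 2)).symm

lemma stdGaussian2_density_eq (x : EuclideanSpace ℝ (Fin 2)) :
    ENNReal.ofReal ((2 * Real.pi) ^ (-(2 : ℝ) / 2) * Real.exp (-‖x‖ ^ 2 / 2)) =
      gaussianPDF 0 1 (x 0) * gaussianPDF 0 1 (x 1) := by
  have hnorm : ‖x‖ ^ 2 = x 0 ^ 2 + x 1 ^ 2 := by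
    simp [EuclideanSpace.real_norm_sq_eq, Fin.sum_univ_two]
  have hpow : (2 * Real.pi) ^ (-(2 : ℝ) / 2) = (√(2 * Real.pi))⁻¹ * (√(2 * Real.pi))⁻¹ := by
    rw [← mul_inv, Real.mul_self_sqrt (by positivity), show -(2 : ℝ) / 2 = -1 by norm_num,
      Real.rpow_neg_one]
  rw [gaussianPDF, gaussianPDF, ← ENNReal.ofReal_mul (gaussianPDFReal_nonneg _ _ _),
    gaussianPDFReal, gaussianPDFReal, hpow, hnorm]
  congr 1
  simp only [NNReal.coe_one, mul_one, sub_zero]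
  rw [show -(x 0 ^ 2 + x 1 ^ 2) / 2 = -x 0 ^ 2 / 2 + -x 1 ^ 2 / 2 by ring, Real.exp_add]
  ring

lemma stdGaussian2_eq_map_prod :
    stdGaussian2 = ((gaussianReal 0 1).prod (gaussianReal 0 1)).map euclideanOfProd := by
  ext s hs
  rw [euclideanOfProd.map_apply, gaussianReal_of_var_ne_zero 0 one_ne_zero,
    prod_withDensity (measurable_gaussianPDF 0 1) (measurable_gaussianPDF 0 1),
    ← Measure.volume_eq_prod, withDensity_apply _ (euclideanOfProd.measurable hs), stdGaussian2,
    withDensity_apply _ hs, ← measurePreserving_euclideanOfProd.setLIntegral_comp_preimage_emb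
      euclideanOfProd.measurableEmbedding]
  simp only [stdGaussian2_density_eq, euclideanOfProd_apply_zero, euclideanOfProd_apply_one]

lemma stdGaussian2_eq_stdGaussian : stdGaussian2 = stdGaussian (EuclideanSpace ℝ (Fin 2)) := by
  rw [stdGaussian2_eq_map_prod, ← map_pi_eq_stdGaussian,
    ← (measurePreserving_finTwoArrow (gaussianReal 0 1)).map_eq,
    Measure.map_map euclideanOfProd.measurable MeasurableEquiv.finTwoArrow.measurable]
  congr 1
  ext f i
  fin_cases i <;> rfl

instance : IsProbabilityMeasure stdGaussian2 := by
  rw [stdGaussian2_eq_stdGaussian]; infer_instance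

lemma stdGaussian2_coord_mem_and_mem (A B : Set ℝ) :
    stdGaussian2 {x | x 0 ∈ A ∧ x 1 ∈ B} = gaussianReal 0 1 A * gaussianReal 0 1 B := by
  rw [stdGaussian2_eq_map_prod, euclideanOfProd.map_apply, ← Measure.prod_prod]
  rfl

/-- The unit vector at angle `θ`, i.e. `U_θ e₁`; thus `U_θ {|x₁| ≤ a} = slab (dir θ) a`. -/
noncomputable def dir (θ : ℝ) : EuclideanSpace ℝ (Fin 2) := !₂[Real.cos θ, Real.sin θ]

lemma norm_dir (θ : ℝ) : ‖dir θ‖ = 1 := by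
  rw [EuclideanSpace.norm_eq, Real.sqrt_eq_one]
  simp [dir, Fin.sum_univ_two]

lemma inner_dir (θ : ℝ) (x : EuclideanSpace ℝ (Fin 2)) :
    ⟪dir θ, x⟫ = Real.cos θ * x 0 + Real.sin θ * x 1 := by
  simp [dir, PiLp.inner_apply, Fin.sum_univ_two, mul_comm]

lemma stdGaussian2_slab_dir_le (θ r : ℝ) : stdGaussian2 (slab (dir θ) r) ≤ ENNReal.ofReal r := by
  rw [stdGaussian2_eq_stdGaussian, stdGaussian_slab (norm_dir θ)]
  exact gaussianReal_Icc_le r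

lemma slab_dir_zero_add_slab_dir_eq_univ {θ : ℝ} (hθ : Real.sin θ ≠ 0) {r : ℝ} (hr : 0 ≤ r) :
    slab (dir 0) r + slab (dir θ) r = univ :=
  slab_add_slab_eq_univ (f := dir (Real.pi / 2)) (by rw [inner_dir]; simp [dir])
    (by rw [inner_dir]; simpa [dir] using hθ) hr

lemma rectangle_subset_slab_dir_zero_inter_slab_dir {θ r : ℝ} (hθ : |Real.sin θ| ≤ r / 2) :
    {x : EuclideanSpace ℝ (Fin 2) | x 0 ∈ Icc (-(r / 2)) (r / 2) ∧ x 1 ∈ Icc (-1) 1} ⊆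
      slab (dir 0) r ∩ slab (dir θ) r := by
  rintro x ⟨hx₀, hx₁⟩
  have hx₀' : |x 0| ≤ r / 2 := abs_le.2 hx₀
  have hx₁' : |x 1| ≤ 1 := abs_le.2 hx₁
  refine ⟨by simp [slab, inner_dir]; linarith [abs_nonneg (Real.sin θ)], ?_⟩
  calc |⟪dir θ, x⟫| ≤ |Real.cos θ| * |x 0| + |Real.sin θ| * |x 1| := by
        rw [inner_dir, ← abs_mul, ← abs_mul]; exact abs_add_le _ _
    _ ≤ 1 * (r / 2) + r / 2 * 1 := by
        gcongr
        · exact Real.abs_cos_le_one θ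
        · exact (abs_nonneg _).trans hθ
    _ = r := by ring

lemma ofReal_div_eighteen_le_stdGaussian2_slab_inter {θ a : ℝ} (ha : a ≤ 1)
    (hθ : |Real.sin θ| ≤ a / 2) :
    ENNReal.ofReal (a / 18) ≤ stdGaussian2 (slab (dir 0) a ∩ slab (dir θ) a) := by
  calc ENNReal.ofReal (a / 18) = ENNReal.ofReal (1 / 3) * ENNReal.ofReal (a / 2 / 3) := by
        rw [← ENNReal.ofReal_mul (by norm_num)]; ring_nf
    _ ≤ gaussianReal 0 1 (Icc (-1) 1) * gaussianReal 0 1 (Icc (-(a / 2)) (a / 2)) := by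
        gcongr
        · simpa using ofReal_div_three_le_gaussianReal_Icc le_rfl
        · exact ofReal_div_three_le_gaussianReal_Icc (by linarith)
    _ = stdGaussian2 {x | x 0 ∈ Icc (-(a / 2)) (a / 2) ∧ x 1 ∈ Icc (-1) 1} := by
        rw [stdGaussian2_coord_mem_and_mem, mul_comm]
    _ ≤ stdGaussian2 (slab (dir 0) a ∩ slab (dir θ) a) :=
        measure_mono (rectangle_subset_slab_dir_zero_inter_slab_dir hθ)

/-- No reverse Gaussian Rogers–Shephard inequality: there are no constants `C₁ > 0`,
`C₂, C₃ ≥ 1` such that `γ(K ∩ L) γ(C₁(K + L)) ≤ C₂ γ(C₃ K) γ(C₃ L)` for all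
origin-symmetric convex sets `K, L ⊂ ℝ²`. -/
theorem no_reverse_gaussian_rogers_shephard :
    ¬ ∃ C₁ C₂ C₃ : ℝ, 0 < C₁ ∧ 1 ≤ C₂ ∧ 1 ≤ C₃ ∧
      ∀ K L : Set (EuclideanSpace ℝ (Fin 2)),
        Convex ℝ K → Convex ℝ L → K = -K → L = -L →
          stdGaussian2 (K ∩ L) * stdGaussian2 (C₁ • (K + L)) ≤
            ENNReal.ofReal C₂ * (stdGaussian2 (C₃ • K) * stdGaussian2 (C₃ • L)) := by
  rintro ⟨C₁, C₂, C₃, hC₁, hC₂, hC₃, H⟩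
  set a := 1 / (36 * C₂ * C₃ ^ 2) with ha_def
  have ha₀ : 0 < a := by positivity
  have ha₁ : a ≤ 1 := div_le_one_of_le₀ (by nlinarith) (by positivity)
  have hθ : 0 < Real.sin (a / 2) :=
    Real.sin_pos_of_pos_of_lt_pi (by positivity) (by linarith [Real.pi_gt_three])
  have hθa : |Real.sin (a / 2)| ≤ a / 2 :=
    Real.abs_sin_le_abs.trans (abs_of_pos (half_pos ha₀)).le
  have h := H (slab (dir 0) a) (slab (dir (a / 2)) a) (convex_slab _ _) (convex_slab _ _)
    (neg_slab _ _).symm (neg_slab _ _).symm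
  rw [slab_dir_zero_add_slab_dir_eq_univ hθ.ne' ha₀.le, smul_set_univ₀ hC₁.ne', measure_univ,
    mul_one, smul_slab (by positivity), smul_slab (by positivity)] at h
  have key : ENNReal.ofReal (a / 18) ≤ ENNReal.ofReal (C₂ * ((C₃ * a) * (C₃ * a))) :=
    calc ENNReal.ofReal (a / 18) ≤ _ := ofReal_div_eighteen_le_stdGaussian2_slab_inter ha₁ hθa
      _ ≤ _ := h
      _ ≤ _ := by
        rw [ENNReal.ofReal_mul (by positivity), ENNReal.ofReal_mul (by positivity)]
        gcongr <;> exact stdGaussian2_slab_dir_le _ _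
  have hsq : C₂ * ((C₃ * a) * (C₃ * a)) = a / 36 := by rw [ha_def]; field_simp
  rw [hsq, ENNReal.ofReal_le_ofReal_iff (by positivity)] at key
  linarith
end
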